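/- arXiv:1510.08936 — 4 statements merged into one kernel-verified Lean document; each statement's English description precedes it below -/
import Mathlib

section
/- For every k > 0 and every ρ > 0 there are infinitely many N ∈ ℕ such that the difference set of C_N^k intersects B_ρ only in zero; that is, for all l, m ∈ ℤ³ with N − k ≤ |l|² ≤ N + k and N − k ≤ |m|² ≤ N + k, if |l − m|² ≤ ρ then l = m. -/
/-- Squared Euclidean norm on `ℤ³`. -/
def znormSq (j : Fin 3 → ℤ) : ℝ := ∑ i, ((j i : ℝ))^2

/-!
Suppose `l ≠ m` lie in `C_N^k` and `d = l - m` lies in `B_ρ`. Then `e = |d|²`, `j = |m|² - N` and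
`c = m ⬝ᵥ d` lie in a finite box, and `u = m ⨯₃ d` satisfies `u ⬝ᵥ d = 0` and
`|u|² = e (N + j) - c²` (Lagrange's identity). Let `p` be a prime at which `-e` is a non-residue
and which divides `|u|²`. Modulo `p`, either `u ≡ 0`, so that `p²` divides `|u|²`, or `u` is a
nonzero isotropic vector orthogonal to `d`, which forces `-e` to be a square. Hence it suffices
that for every triple `(e, j, c)` of the box some such prime divides `e (N + j) - c²` exactly once.
By Dirichlet's theorem there are arbitrarily large primes `p ≡ -1 mod 4 e!`, and for them `-e` is
a non-residue by quadratic reciprocity; the condition `e (N + j) - c² ≡ p mod p²` is a residue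
class of `N`, and the Chinese remainder theorem combines these classes over the whole box.
-/

open Matrix Nat

theorem cross_apply_sq_of_isotropic {R : Type*} [CommRing R] {u d : Fin 3 → R}
    (huu : u ⬝ᵥ u = 0) (hud : u ⬝ᵥ d = 0) (i : Fin 3) :
    (u ⨯₃ d) i ^ 2 = -(d ⬝ᵥ d) * u i ^ 2 := by
  simp only [vec3_dotProduct] at huu hud ⊢
  fin_cases i <;> simp only [Fin.zero_eta, Fin.mk_one, Fin.reduceFinMk, Fin.isValue, cross_apply,
    cons_val_zero, cons_val_one, cons_val]
  · linear_combination (d 1 ^ 2 + d 2 ^ 2) * huu - (u 1 * d 1 + u 2 * d 2 - u 0 * d 0) * hud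
  · linear_combination (d 0 ^ 2 + d 2 ^ 2) * huu - (u 0 * d 0 + u 2 * d 2 - u 1 * d 1) * hud
  · linear_combination (d 0 ^ 2 + d 1 ^ 2) * huu - (u 0 * d 0 + u 1 * d 1 - u 2 * d 2) * hud

theorem isSquare_neg_dotProduct_self_of_isotropic {K : Type*} [Field K] {u d : Fin 3 → K}
    (hu : u ≠ 0) (huu : u ⬝ᵥ u = 0) (hud : u ⬝ᵥ d = 0) : IsSquare (-(d ⬝ᵥ d)) := by
  obtain ⟨i, hi⟩ := Function.ne_iff.mp hu
  refine ⟨(u ⨯₃ d) i / u i, ?_⟩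
  rw [← sq, div_pow, cross_apply_sq_of_isotropic huu hud,
    mul_div_cancel_right₀ _ (pow_ne_zero 2 hi)]

theorem sq_dvd_dotProduct_self_of_dvd {p : ℕ} [Fact p.Prime] {u d : Fin 3 → ℤ}
    (hd : ¬IsSquare (-((d ⬝ᵥ d : ℤ) : ZMod p))) (hud : u ⬝ᵥ d = 0) (hp : (p : ℤ) ∣ u ⬝ᵥ u) :
    (p : ℤ) ^ 2 ∣ u ⬝ᵥ u := by
  by_cases hu : ∀ i, (p : ℤ) ∣ u i
  · exact Finset.dvd_sum fun i _ => sq (p : ℤ) ▸ mul_dvd_mul (hu i) (hu i)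
  · push Not at hu
    obtain ⟨i, hi⟩ := hu
    let f := Int.castRingHom (ZMod p)
    refine absurd ?_ hd
    rw [← eq_intCast f, RingHom.map_dotProduct]
    refine isSquare_neg_dotProduct_self_of_isotropic (u := f ∘ u)
      (Function.ne_iff.mpr ⟨i, ?_⟩) ?_ ?_
    · simpa [f, ZMod.intCast_zmod_eq_zero_iff_dvd] using hi
    · rwa [← RingHom.map_dotProduct, eq_intCast, ZMod.intCast_zmod_eq_zero_iff_dvd]
    · rw [← RingHom.map_dotProduct, hud, map_zero]

theorem dvd_and_not_sq_dvd_of_modEq {p v : ℤ} (hp : Prime p) (h : v ≡ p [ZMOD p ^ 2]) :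
    p ∣ v ∧ ¬p ^ 2 ∣ v := by
  have hdvd : p ^ 2 ∣ p - v := Int.ModEq.dvd h
  refine ⟨(dvd_sub_right (dvd_refl p)).mp ((dvd_pow_self p two_ne_zero).trans hdvd), fun hv => ?_⟩
  have : p * p ∣ p * 1 := by simpa [sq] using dvd_add hdvd hv
  exact hp.not_dvd_one ((mul_dvd_mul_iff_left hp.ne_zero).mp this)

theorem isSquare_natCast_of_forall_prime_dvd {R : Type*} [CommSemiring R] {n : ℕ} (hn : n ≠ 0)
    (h : ∀ q, q.Prime → q ∣ n → IsSquare (q : R)) : IsSquare (n : R) := by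
  induction n using induction_on_primes with
  | zero => exact absurd rfl hn
  | one => simp
  | prime_mul q a hq ih =>
    rw [Nat.cast_mul]
    exact (h q hq (dvd_mul_right q a)).mul
      (ih (right_ne_zero_of_mul hn) fun r hr hra => h r hr (hra.mul_left q))

theorem isSquare_natCast_prime_of_four_mul_dvd_add_one {p q : ℕ} [Fact p.Prime]
    (hq : q.Prime) (h : 4 * q ∣ p + 1) : IsSquare (q : ZMod p) := by
  have hp4 : p % 4 = 3 := by have := (dvd_mul_right 4 q).trans h; omega
  have hp2 : p ≠ 2 := by omega
  rcases hq.eq_two_or_odd' with rfl | hq_odd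
  · exact_mod_cast (ZMod.exists_sq_eq_two_iff hp2).mpr (Or.inr (by omega))
  have hqp : q ∣ p + 1 := (dvd_mul_left q 4).trans h
  have hpq : (p : ZMod q) = -1 := by
    rwa [eq_neg_iff_add_eq_zero, ← Nat.cast_one, ← Nat.cast_add, ZMod.natCast_eq_zero_iff]
  have : Fact q.Prime := ⟨hq⟩
  rcases Nat.odd_mod_four_iff.mp (Nat.odd_iff.mp hq_odd) with hq1 | hq3
  · refine (ZMod.exists_sq_eq_prime_iff_of_mod_four_eq_one hq1 hp2).mp ?_
    rw [hpq, ZMod.exists_sq_eq_neg_one_iff]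
    omega
  · have hne : p ≠ q := by
      rintro rfl
      exact hq.one_lt.ne' (Nat.dvd_one.mp ((Nat.dvd_add_right (dvd_refl p)).mp hqp))
    rw [ZMod.exists_sq_eq_prime_iff_of_mod_four_eq_three hp4 hq3 hne, hpq,
      ZMod.exists_sq_eq_neg_one_iff]
    omega

theorem not_isSquare_neg_natCast_of_dvd_add_one {p e : ℕ} [hp : Fact p.Prime] (he : 0 < e)
    (h : 4 * e ! ∣ p + 1) : ¬IsSquare (-(e : ZMod p)) := by
  have hep : e < p := by
    by_contra! hpe
    have : p ∣ 1 :=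
      (Nat.dvd_add_right (dvd_refl p)).mp (((hp.out.dvd_factorial.mpr hpe).mul_left 4).trans h)
    exact hp.out.one_lt.ne' (Nat.dvd_one.mp this)
  have he_sq : IsSquare (e : ZMod p) :=
    isSquare_natCast_of_forall_prime_dvd he.ne' fun q hq hqe =>
      isSquare_natCast_prime_of_four_mul_dvd_add_one hq
        ((Nat.mul_dvd_mul_left 4 (Nat.dvd_factorial hq.pos (Nat.le_of_dvd he hqe))).trans h)
  have he0 : (e : ZMod p) ≠ 0 := by
    rw [Ne, ZMod.natCast_eq_zero_iff]
    exact Nat.not_dvd_of_pos_of_lt he hep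
  intro hneg
  have hp4 : p % 4 = 3 := by have := (dvd_mul_right 4 e !).trans h; omega
  have : IsSquare (-1 : ZMod p) := by simpa [neg_div, div_self he0] using hneg.div he_sq
  exact ZMod.exists_sq_eq_neg_one_iff.mp this hp4

theorem exists_prime_gt_dvd_add_one (n : ℕ) {a : ℕ} (ha : a ≠ 0) :
    ∃ p, n < p ∧ p.Prime ∧ a ∣ p + 1 := by
  have : NeZero a := ⟨ha⟩
  obtain ⟨p, hnp, hp, hpa⟩ :=
    Nat.forall_exists_prime_gt_and_eq_mod (isUnit_one.neg : IsUnit (-1 : ZMod a)) n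
  refine ⟨p, hnp, hp, ?_⟩
  rwa [← ZMod.natCast_eq_zero_iff, Nat.cast_add, Nat.cast_one, ← eq_neg_iff_add_eq_zero]

theorem exists_modEq_intCast_mul_modEq {n : ℕ} [NeZero n] {e : ℤ} (he : IsCoprime e n) (s : ℤ) :
    ∃ r : ℕ, ∀ N : ℕ, N ≡ r [MOD n] → e * N ≡ s [ZMOD n] := by
  obtain ⟨a, b, hab⟩ := he
  refine ⟨((a * s : ℤ) : ZMod n).val, fun N hN => ?_⟩
  rw [← ZMod.intCast_eq_intCast_iff]
  rw [← ZMod.natCast_eq_natCast_iff, ZMod.natCast_zmod_val] at hN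
  have hab' : (a : ZMod n) * e = 1 := by
    simpa using congrArg (Int.cast : ℤ → ZMod n) hab
  push_cast
  rw [hN, Int.cast_mul]
  linear_combination (s : ZMod n) * hab'

theorem exists_modEq_forall_of_coprime {ι : Type*} (s : Finset ι) (P : ι → ℕ → Prop)
    (h : ∀ i ∈ s, ∀ M, 0 < M → ∃ q r, 0 < q ∧ M.Coprime q ∧ ∀ N, N ≡ r [MOD q] → P i N) :
    ∃ M r, 0 < M ∧ ∀ N, N ≡ r [MOD M] → ∀ i ∈ s, P i N := by
  classical
  induction s using Finset.induction_on with
  | empty => exact ⟨1, 0, one_pos, by simp⟩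
  | insert a s _ ih =>
    obtain ⟨M, r, hM, hMr⟩ := ih fun i hi => h i (Finset.mem_insert_of_mem hi)
    obtain ⟨q, r', hq, hMq, hqr'⟩ := h a (Finset.mem_insert_self a s) M hM
    obtain ⟨t, ht, ht'⟩ := Nat.chineseRemainder hMq r r'
    refine ⟨M * q, t, Nat.mul_pos hM hq, fun N hN i hi => ?_⟩
    rcases Finset.mem_insert.mp hi with rfl | hi
    · exact hqr' N ((hN.of_mul_left M).trans ht')
    · exact hMr N ((hN.of_mul_right q).trans ht) i hi

def HasPrimeObstruction (e n c : ℤ) : Prop :=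
  ∃ p : ℕ, p.Prime ∧ ¬IsSquare (-(e : ZMod p)) ∧ e * n - c ^ 2 ≡ p [ZMOD p ^ 2]

theorem not_hasPrimeObstruction (m d : Fin 3 → ℤ) :
    ¬HasPrimeObstruction (d ⬝ᵥ d) (m ⬝ᵥ m) (m ⬝ᵥ d) := by
  rintro ⟨p, hp, hd, hmod⟩
  have : Fact p.Prime := ⟨hp⟩
  have hlagrange : m ⨯₃ d ⬝ᵥ m ⨯₃ d = d ⬝ᵥ d * m ⬝ᵥ m - (m ⬝ᵥ d) ^ 2 := by
    rw [cross_dot_cross, dotProduct_comm d m]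
    ring
  rw [← hlagrange] at hmod
  obtain ⟨hdvd, hndvd⟩ := dvd_and_not_sq_dvd_of_modEq (Nat.prime_iff_prime_int.mp hp) hmod
  exact hndvd (sq_dvd_dotProduct_self_of_dvd hd (by rw [dotProduct_comm, dot_cross_self]) hdvd)

theorem exists_modEq_hasPrimeObstruction {e : ℤ} (he : 0 < e) (j c : ℤ) {M : ℕ} (hM : 0 < M) :
    ∃ q r : ℕ, 0 < q ∧ M.Coprime q ∧
      ∀ N : ℕ, N ≡ r [MOD q] → HasPrimeObstruction e (N + j) c := by
  lift e to ℕ using he.le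
  have he' : 0 < e := by exact_mod_cast he
  obtain ⟨p, hp_gt, hp, hp1⟩ := exists_prime_gt_dvd_add_one (M + e) (by positivity : 4 * e ! ≠ 0)
  have : Fact p.Prime := ⟨hp⟩
  have : NeZero (p ^ 2) := ⟨(pow_pos hp.pos 2).ne'⟩
  have hcop : IsCoprime (e : ℤ) ((p ^ 2 : ℕ) : ℤ) := by
    rw [Nat.isCoprime_iff_coprime]
    exact Nat.Coprime.pow_right 2 (Nat.coprime_of_lt_prime (by omega) (by omega) hp).symm
  obtain ⟨r, hr⟩ := exists_modEq_intCast_mul_modEq hcop (c ^ 2 + p - e * j)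
  refine ⟨p ^ 2, r, pow_pos hp.pos 2,
    Nat.Coprime.pow_right 2 (Nat.coprime_of_lt_prime hM.ne' (by omega) hp).symm,
    fun N hN => ⟨p, hp, by exact_mod_cast not_isSquare_neg_natCast_of_dvd_add_one he' hp1, ?_⟩⟩
  have hNr := hr N hN
  push_cast at hNr
  calc (e : ℤ) * (N + j) - c ^ 2 = e * N + e * j - c ^ 2 := by ring
    _ ≡ c ^ 2 + p - e * j + e * j - c ^ 2 [ZMOD p ^ 2] := by gcongr
    _ = p := by ring

noncomputable def tripleBox (B : ℤ) : Finset (ℤ × ℤ × ℤ) :=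
  Finset.Icc 1 B ×ˢ Finset.Icc (-B) B ×ˢ Finset.Icc (-B) B

theorem mem_tripleBox_of_abs_sub_le {l m : Fin 3 → ℤ} {N K E : ℤ} (hl : |l ⬝ᵥ l - N| ≤ K)
    (hm : |m ⬝ᵥ m - N| ≤ K) (hlm : (l - m) ⬝ᵥ (l - m) ≤ E) (hne : l ≠ m) :
    ((l - m) ⬝ᵥ (l - m), m ⬝ᵥ m - N, m ⬝ᵥ (l - m)) ∈ tripleBox (K + E) := by
  set d := l - m
  have hexpand : l ⬝ᵥ l = m ⬝ᵥ m + 2 * (m ⬝ᵥ d) + d ⬝ᵥ d := by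
    rw [show l = m + d by simp [d], add_dotProduct, dotProduct_add, dotProduct_add,
      dotProduct_comm d m]
    ring
  have hd_pos : 0 < d ⬝ᵥ d :=
    lt_of_le_of_ne (Finset.sum_nonneg fun i _ => mul_self_nonneg (d i))
      (Ne.symm (dotProduct_self_eq_zero.not.mpr (sub_ne_zero.mpr hne)))
  rw [abs_le] at hl hm
  simp only [tripleBox, Finset.mem_product, Finset.mem_Icc]
  omega

theorem znormSq_eq_dotProduct (l : Fin 3 → ℤ) : znormSq l = ((l ⬝ᵥ l : ℤ) : ℝ) := by
  simp [znormSq, dotProduct, sq]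

theorem abs_sub_natCast_le_ceil {x : ℤ} {N : ℕ} {k : ℝ}
    (h : (N : ℝ) - k ≤ x ∧ (x : ℝ) ≤ N + k) : |x - N| ≤ ⌈k⌉ := by
  have hk := Int.le_ceil k
  have h₁ : ((x - N : ℤ) : ℝ) ≤ ⌈k⌉ := by push_cast; linarith [h.2]
  have h₂ : ((N - x : ℤ) : ℝ) ≤ ⌈k⌉ := by push_cast; linarith [h.1]
  exact abs_sub_le_iff.mpr ⟨by exact_mod_cast h₁, by exact_mod_cast h₂⟩

theorem infinitely_many_good_N_general (k ρ : ℝ) :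
    {N : ℕ | ∀ l m : Fin 3 → ℤ,
      ((N : ℝ) - k ≤ znormSq l ∧ znormSq l ≤ (N : ℝ) + k) →
      ((N : ℝ) - k ≤ znormSq m ∧ znormSq m ≤ (N : ℝ) + k) →
      znormSq (l - m) ≤ ρ → l = m}.Infinite := by
  obtain ⟨M, r, hM, hobstr⟩ := exists_modEq_forall_of_coprime (tripleBox (⌈k⌉ + ⌊ρ⌋))
    (fun t N => HasPrimeObstruction t.1 (N + t.2.1) t.2.2) fun t ht _ hM =>
      exists_modEq_hasPrimeObstruction (Finset.mem_Icc.mp (Finset.mem_product.mp ht).1).1 _ _ hM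
  refine (Nat.frequently_atTop_iff_infinite.mp (Nat.frequently_modEq hM.ne' r)).mono
    fun N hN l m hl hm hlm => ?_
  simp only [znormSq_eq_dotProduct] at hl hm hlm
  by_contra hne
  have hmem := mem_tripleBox_of_abs_sub_le (abs_sub_natCast_le_ceil hl)
    (abs_sub_natCast_le_ceil hm) (Int.le_floor.mpr hlm) hne
  have h := hobstr N hN _ hmem
  rw [add_sub_cancel] at h
  exact not_hasPrimeObstruction m (l - m) h

/-- For every `k > 0` and every `ρ > 0` there are infinitely many `N ∈ ℕ` such that the
difference set of `C_N^k = {l ∈ ℤ³ : N − k ≤ |l|² ≤ N + k}` intersects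
`B_ρ = {l : |l|² ≤ ρ}` only in zero. -/
theorem infinitely_many_good_N (k ρ : ℝ) (hk : 0 < k) (hρ : 0 < ρ) :
    {N : ℕ | ∀ l m : Fin 3 → ℤ,
      ((N : ℝ) - k ≤ znormSq l ∧ znormSq l ≤ (N : ℝ) + k) →
      ((N : ℝ) - k ≤ znormSq m ∧ znormSq m ≤ (N : ℝ) + k) →
      znormSq (l - m) ≤ ρ → l = m}.Infinite :=
  infinitely_many_good_N_general k ρ
end

section
/- Let λ, θ ∈ ℝ with λ ≠ θ. Suppose v : ℝ → ℂ is differentiable, h : ℝ → ℂ is measurable, v′(t) + λ v(t) = h(t) for all t ∈ ℝ, and both t ↦ e^{θt} v(t) and t ↦ e^{θt} h(t) are square integrable over ℝ. Then ∫_ℝ e^{2θt} |v(t)|² dt ≤ (λ − θ)⁻² ∫_ℝ e^{2θt} |h(t)|² dt. -/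
/-! With `w = e^{θt} v` and `g = e^{θt} h` the equation becomes `w' + (λ - θ) w = g`. Since
`‖w‖²` and its derivative `2⟪w, w'⟫` are integrable over `ℝ`, `∫ ⟪w, w'⟫ = 0`, i.e.
`(λ - θ) ∫ ‖w‖² = ∫ ⟪w, g⟫`. Integrating the pointwise bound
`2 |λ - θ| |⟪w, g⟫| ≤ (λ - θ)² ‖w‖² + ‖g‖²` then gives
`2 (λ - θ)² ∫ ‖w‖² ≤ (λ - θ)² ∫ ‖w‖² + ∫ ‖g‖²`. -/

open MeasureTheory

section InnerProductSpace

variable {E : Type*} [NormedAddCommGroup E] [InnerProductSpace ℝ E]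

open scoped RealInnerProductSpace

theorem two_mul_abs_mul_abs_real_inner_le (μ : ℝ) (x y : E) :
    2 * |μ| * |⟪x, y⟫| ≤ μ ^ 2 * ‖x‖ ^ 2 + ‖y‖ ^ 2 :=
  calc 2 * |μ| * |⟪x, y⟫| ≤ 2 * (|μ| * ‖x‖) * ‖y‖ := by
        rw [mul_assoc 2, mul_assoc 2, mul_assoc |μ|]
        gcongr
        exact abs_real_inner_le_norm x y
    _ ≤ (|μ| * ‖x‖) ^ 2 + ‖y‖ ^ 2 := two_mul_le_add_sq _ _
    _ = μ ^ 2 * ‖x‖ ^ 2 + ‖y‖ ^ 2 := by rw [mul_pow, sq_abs]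

theorem integrable_real_inner_of_integrable_norm_sq {α : Type*} [MeasurableSpace α]
    {ν : Measure α} {f g : α → E} (hf : AEStronglyMeasurable f ν) (hg : AEStronglyMeasurable g ν)
    (hf2 : Integrable (‖f ·‖ ^ 2) ν) (hg2 : Integrable (‖g ·‖ ^ 2) ν) :
    Integrable (fun t ↦ ⟪f t, g t⟫) ν := by
  refine (hf2.add hg2).mono' (hf.inner hg) (Filter.Eventually.of_forall fun t ↦ ?_)
  have h := two_mul_abs_mul_abs_real_inner_le 1 (f t) (g t)
  rw [abs_one, mul_one, one_pow, one_mul] at h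
  rw [Real.norm_eq_abs, Pi.add_apply]
  linarith [abs_nonneg ⟪f t, g t⟫]

theorem integral_real_inner_deriv_eq_zero {w w' : ℝ → E} (hw : ∀ t, HasDerivAt w (w' t) t)
    (hw2 : Integrable (‖w ·‖ ^ 2)) (hinner : Integrable (fun t ↦ ⟪w t, w' t⟫)) :
    ∫ t, ⟪w t, w' t⟫ = 0 := by
  have h := integral_eq_zero_of_hasDerivAt_of_integrable (fun t ↦ (hw t).norm_sq)
    (hinner.const_mul 2) hw2
  rwa [integral_const_mul, mul_eq_zero, or_iff_right two_ne_zero] at h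

theorem integral_real_inner_eq_mul_integral_norm_sq {w g : ℝ → E} {μ : ℝ}
    (hw : ∀ t, HasDerivAt w (g t - μ • w t) t) (hw2 : Integrable (‖w ·‖ ^ 2))
    (hinner : Integrable (fun t ↦ ⟪w t, g t⟫)) :
    ∫ t, ⟪w t, g t⟫ = μ * ∫ t, ‖w t‖ ^ 2 := by
  have hexpand : ∀ t, ⟪w t, g t - μ • w t⟫ = ⟪w t, g t⟫ - μ * ‖w t‖ ^ 2 := fun t ↦ by
    rw [inner_sub_right, real_inner_smul_right, real_inner_self_eq_norm_sq]
  have h := integral_real_inner_deriv_eq_zero hw hw2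
    (by simp_rw [hexpand]; exact hinner.sub (hw2.const_mul μ))
  simp only [hexpand] at h
  rwa [integral_sub hinner (hw2.const_mul μ), integral_const_mul, sub_eq_zero] at h

variable [CompleteSpace E]

theorem sq_mul_integral_norm_sq_le {w g : ℝ → E} {μ : ℝ}
    (hw : ∀ t, HasDerivAt w (g t - μ • w t) t)
    (hw2 : Integrable (‖w ·‖ ^ 2)) (hg2 : Integrable (‖g ·‖ ^ 2)) :
    μ ^ 2 * ∫ t, ‖w t‖ ^ 2 ≤ ∫ t, ‖g t‖ ^ 2 := by
  have hg_eq : g = fun t ↦ deriv w t + μ • w t := by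
    funext t; rw [(hw t).deriv, sub_add_cancel]
  have hcont : Continuous w := continuous_iff_continuousAt.2 fun t ↦ (hw t).continuousAt
  have hgmeas : AEStronglyMeasurable g := by
    rw [hg_eq]
    exact (aestronglyMeasurable_deriv w _).add (hcont.aestronglyMeasurable.const_smul μ)
  have hinner := integrable_real_inner_of_integrable_norm_sq hcont.aestronglyMeasurable hgmeas
    hw2 hg2
  have hident := integral_real_inner_eq_mul_integral_norm_sq hw hw2 hinner
  have hI : 0 ≤ ∫ t, ‖w t‖ ^ 2 := integral_nonneg fun t ↦ by positivity
  have hamgm : 2 * |μ| * |∫ t, ⟪w t, g t⟫| ≤ μ ^ 2 * (∫ t, ‖w t‖ ^ 2) + ∫ t, ‖g t‖ ^ 2 :=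
    calc 2 * |μ| * |∫ t, ⟪w t, g t⟫| ≤ 2 * |μ| * ∫ t, |⟪w t, g t⟫| := by
          gcongr; exact abs_integral_le_integral_abs
      _ = ∫ t, 2 * |μ| * |⟪w t, g t⟫| := (integral_const_mul _ _).symm
      _ ≤ ∫ t, (μ ^ 2 * ‖w t‖ ^ 2 + ‖g t‖ ^ 2) :=
          integral_mono (hinner.abs.const_mul _) ((hw2.const_mul _).add hg2)
            fun t ↦ two_mul_abs_mul_abs_real_inner_le μ (w t) (g t)
      _ = μ ^ 2 * (∫ t, ‖w t‖ ^ 2) + ∫ t, ‖g t‖ ^ 2 := by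
          rw [integral_add (hw2.const_mul _) hg2, integral_const_mul]
  rw [hident, abs_mul, abs_of_nonneg hI, ← mul_assoc, mul_assoc 2, ← sq, sq_abs] at hamgm
  linarith

end InnerProductSpace

theorem hasDerivAt_exp_mul_smul {E : Type*} [NormedAddCommGroup E] [NormedSpace ℝ E]
    {v h : ℝ → E} {lam θ t : ℝ} (hv : HasDerivAt v (h t - lam • v t) t) :
    HasDerivAt (fun s ↦ Real.exp (θ * s) • v s)
      (Real.exp (θ * t) • h t - (lam - θ) • (Real.exp (θ * t) • v t)) t := by
  have hexp : HasDerivAt (fun s ↦ Real.exp (θ * s)) (Real.exp (θ * t) * θ) t := by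
    simpa using ((hasDerivAt_id t).const_mul θ).exp
  refine (hexp.smul hv).congr_deriv ?_
  module

theorem weighted_mode_estimate_general (lam θ : ℝ) (hne : lam ≠ θ) (v h : ℝ → ℂ)
    (hv : Differentiable ℝ v)
    (hode : ∀ t : ℝ, deriv v t + (lam : ℂ) * v t = h t)
    (hvint : Integrable (fun t : ℝ => Real.exp (2 * θ * t) * ‖v t‖ ^ 2))
    (hhint : Integrable (fun t : ℝ => Real.exp (2 * θ * t) * ‖h t‖ ^ 2)) :
    (∫ t : ℝ, Real.exp (2 * θ * t) * ‖v t‖ ^ 2) ≤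
      ((lam - θ) ^ 2)⁻¹ * ∫ t : ℝ, Real.exp (2 * θ * t) * ‖h t‖ ^ 2 := by
  have hw (t : ℝ) : HasDerivAt (fun s ↦ Real.exp (θ * s) • v s)
      (Real.exp (θ * t) • h t - (lam - θ) • (Real.exp (θ * t) • v t)) t :=
    hasDerivAt_exp_mul_smul <| (hv t).hasDerivAt.congr_deriv <| by
      rw [Complex.real_smul, ← hode t, add_sub_cancel_right]
  have hnorm (x : ℂ) (t : ℝ) :
      ‖Real.exp (θ * t) • x‖ ^ 2 = Real.exp (2 * θ * t) * ‖x‖ ^ 2 := by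
    rw [norm_smul, mul_pow, Real.norm_of_nonneg (Real.exp_pos _).le, sq (Real.exp _),
      ← Real.exp_add, ← two_mul, mul_assoc]
  have key := sq_mul_integral_norm_sq_le hw (by simpa only [hnorm] using hvint)
    (by simpa only [hnorm] using hhint)
  simp only [hnorm] at key
  exact (le_inv_mul_iff₀ (sq_pos_of_ne_zero (sub_ne_zero.2 hne))).2 key

/-- Single-Fourier-mode estimate for the linear problem `v' + λ v = h` in the weighted
space `L²_θ(ℝ)`: if `e^{θt} v` and `e^{θt} h` are square integrable over `ℝ`, then
`∫ e^{2θt}|v|² dt ≤ (λ − θ)⁻² ∫ e^{2θt}|h|² dt`. -/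
theorem weighted_mode_estimate (lam θ : ℝ) (hne : lam ≠ θ) (v h : ℝ → ℂ)
    (hv : Differentiable ℝ v) (hh : Measurable h)
    (hode : ∀ t : ℝ, deriv v t + (lam : ℂ) * v t = h t)
    (hvint : Integrable (fun t : ℝ => Real.exp (2 * θ * t) * ‖v t‖ ^ 2))
    (hhint : Integrable (fun t : ℝ => Real.exp (2 * θ * t) * ‖h t‖ ^ 2)) :
    (∫ t : ℝ, Real.exp (2 * θ * t) * ‖v t‖ ^ 2) ≤
      ((lam - θ) ^ 2)⁻¹ * ∫ t : ℝ, Real.exp (2 * θ * t) * ‖h t‖ ^ 2 :=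
  weighted_mode_estimate_general lam θ hne v h hv hode hvint hhint
end

section
/- Let θ : ℂ → ℂ satisfy |θ(ξ)| ≤ 2 for all ξ ∈ ℂ and let C* > 0. Then for every ε > 0 there exists a constant C_ε > 0, depending only on ε and C*, such that for every family w : ℤ³\{0} → ℂ³ one has Σ_{j∈ℤ³, j≠0} |j|^{3−2ε} |W(w)_j|² ≤ C_ε; i.e., W is globally bounded as a map from H into H^{3/2−ε}. -/
/-! Since `|θ| ≤ 2` and `P_j` is a contraction, `|W(w)_j|² ≤ 12 C*² |j|⁻⁶` uniformly in `w`, so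
the weighted terms are dominated by `12 C*² |j|^(-3-2ε)`. This majorant is summable over `ℤ³`:
with `q = 1 + 2ε/3 > 1` and `1 + |j_i| ≤ 2|j|`, one has `|j|^(-3q) ≤ 2^(3q) ∏ᵢ (1 + |j_i|)^(-q)`,
a product of three convergent one-dimensional series. -/

noncomputable section

/-- Euclidean norm `|j|` on `ℤ³`. -/
def znorm (j : Fin 3 → ℤ) : ℝ := Real.sqrt (znormSq j)

/-- Squared Euclidean norm `|x|² = Σ_k |x^k|²` of a vector `x ∈ ℂ³`. -/
def vnormSq (x : Fin 3 → ℂ) : ℝ := ∑ i, ‖x i‖ ^ 2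

/-- The Leray projector matrix `P_j = Id − |j|⁻² j jᵀ` acting on `ℂ³`. -/
def leray (j : Fin 3 → ℤ) (x : Fin 3 → ℂ) : Fin 3 → ℂ :=
  fun i => x i - ((∑ k, (j k : ℂ) * x k) / ((znormSq j : ℝ) : ℂ)) * (j i : ℂ)

/-- The truncation map `W`, defined coefficientwise by
`W(w)_j = (C*/|j|³) P_j θ⃗(|j|³ w_j / C*)`. -/
def Wmap (θ : ℂ → ℂ) (Cs : ℝ) (w : (Fin 3 → ℤ) → (Fin 3 → ℂ)) (j : Fin 3 → ℤ) :
    Fin 3 → ℂ :=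
  fun i => ((Cs / (znorm j) ^ 3 : ℝ) : ℂ) *
    leray j (fun k => θ ((((znorm j) ^ 3 / Cs : ℝ) : ℂ) * w j k)) i

/-- The derivative of the truncation map,
`(W′(w)z)_j = P_j Dθ⃗(|j|³ w_j / C*)[z_j]`. -/
def Wderiv (θ : ℂ → ℂ) (Cs : ℝ) (w z : (Fin 3 → ℤ) → (Fin 3 → ℂ)) (j : Fin 3 → ℤ) :
    Fin 3 → ℂ :=
  leray j (fun k => fderiv ℝ θ ((((znorm j) ^ 3 / Cs : ℝ) : ℂ) * w j k) (z j k))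

open Finset

lemma summable_one_add_abs_int_rpow_neg {q : ℝ} (hq : 1 < q) :
    Summable fun n : ℤ => (1 + |(n : ℝ)|) ^ (-q) := by
  refine (Real.summable_abs_int_rpow hq).of_norm_bounded_eventually ?_
  filter_upwards [Filter.eventually_cofinite_ne 0] with n hn
  rw [Real.norm_of_nonneg (by positivity)]
  exact Real.rpow_le_rpow_of_nonpos (by positivity) (by linarith) (by linarith)

lemma summable_prod_apply_of_nonneg {β : Type*} {f : β → ℝ} (hf₀ : 0 ≤ f) (hf : Summable f) :
    ∀ n : ℕ, Summable fun j : Fin n → β => ∏ i, f (j i)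
  | 0 => .of_finite
  | n + 1 => by
    have hprod := hf.mul_of_nonneg (summable_prod_apply_of_nonneg hf₀ hf n) hf₀
      fun t => prod_nonneg fun i _ => hf₀ (t i)
    refine ((Fin.consEquiv fun _ => β).summable_iff.mp ?_)
    refine hprod.congr fun x => ?_
    simp [Fin.prod_univ_succ]

lemma znormSq_nonneg (j : Fin 3 → ℤ) : 0 ≤ znormSq j :=
  sum_nonneg fun _ _ => sq_nonneg _

lemma znorm_zero : znorm 0 = 0 := by
  simp [znorm, znormSq]

lemma znorm_nonneg (j : Fin 3 → ℤ) : 0 ≤ znorm j :=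
  Real.sqrt_nonneg _

lemma znorm_sq (j : Fin 3 → ℤ) : znorm j ^ 2 = znormSq j :=
  Real.sq_sqrt (znormSq_nonneg j)

lemma sq_le_znormSq (j : Fin 3 → ℤ) (i : Fin 3) : (j i : ℝ) ^ 2 ≤ znormSq j :=
  single_le_sum (fun k _ => sq_nonneg (j k : ℝ)) (mem_univ i)

lemma abs_le_znorm (j : Fin 3 → ℤ) (i : Fin 3) : |(j i : ℝ)| ≤ znorm j :=
  Real.abs_le_sqrt (sq_le_znormSq j i)

lemma one_le_znorm {j : Fin 3 → ℤ} (hj : j ≠ 0) : 1 ≤ znorm j := by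
  obtain ⟨i, hi⟩ := Function.ne_iff.mp hj
  calc (1 : ℝ) ≤ |(j i : ℝ)| := by exact_mod_cast Int.one_le_abs hi
    _ ≤ znorm j := abs_le_znorm j i

lemma znorm_pos {j : Fin 3 → ℤ} (hj : j ≠ 0) : 0 < znorm j :=
  one_pos.trans_le (one_le_znorm hj)

lemma znorm_rpow_neg_le_prod {j : Fin 3 → ℤ} (hj : j ≠ 0) {s : ℝ} (hs : 0 ≤ s) :
    znorm j ^ (-s) ≤ 2 ^ s * ∏ i, (1 + |(j i : ℝ)|) ^ (-(s / 3)) := by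
  have h2a : 0 < 2 * znorm j := by linarith [znorm_pos hj]
  calc znorm j ^ (-s) = 2 ^ s * ∏ _i : Fin 3, (2 * znorm j) ^ (-(s / 3)) := by
        rw [prod_const, card_univ, Fintype.card_fin, ← Real.rpow_mul_natCast h2a.le,
          Real.mul_rpow zero_le_two (znorm_pos hj).le, ← mul_assoc, ← Real.rpow_add two_pos,
          show -(s / 3) * ((3 : ℕ) : ℝ) = -s by push_cast; ring, add_neg_cancel, Real.rpow_zero,
          one_mul]
    _ ≤ 2 ^ s * ∏ i, (1 + |(j i : ℝ)|) ^ (-(s / 3)) := by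
        refine mul_le_mul_of_nonneg_left (prod_le_prod (fun i _ => by positivity) fun i _ => ?_)
          (by positivity)
        exact Real.rpow_le_rpow_of_nonpos (by positivity)
          (by linarith [abs_le_znorm j i, one_le_znorm hj]) (by linarith)

lemma summable_znorm_rpow_neg {s : ℝ} (hs : 3 < s) :
    Summable fun j : Fin 3 → ℤ => znorm j ^ (-s) := by
  have hprod := summable_prod_apply_of_nonneg (fun n => by positivity)
    (summable_one_add_abs_int_rpow_neg (q := s / 3) (by linarith)) 3
  refine (hprod.mul_left (2 ^ s)).of_nonneg_of_le (fun j => Real.rpow_nonneg (znorm_nonneg j) _)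
    fun j => ?_
  rcases eq_or_ne j 0 with rfl | hj
  · rw [znorm_zero, Real.zero_rpow (by linarith)]
    positivity
  · exact znorm_rpow_neg_le_prod hj (by linarith)

/-- Pythagoras: `P_j x` is orthogonal to `(j · x / |j|²) j`. -/
lemma vnormSq_leray_add {j : Fin 3 → ℤ} (hj : j ≠ 0) (x : Fin 3 → ℂ) :
    vnormSq (leray j x) + ‖∑ k, (j k : ℂ) * x k‖ ^ 2 / znormSq j = vnormSq x := by
  have hs : znormSq j ≠ 0 := by rw [← znorm_sq]; exact (pow_pos (znorm_pos hj) 2).ne'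
  simp only [znormSq, Fin.sum_univ_three] at hs ⊢
  simp only [vnormSq, leray, znormSq, Fin.sum_univ_three, Complex.sq_norm, Complex.normSq_apply,
    Complex.sub_re, Complex.sub_im, Complex.mul_re, Complex.mul_im, Complex.div_ofReal_re,
    Complex.div_ofReal_im, Complex.add_re, Complex.add_im, Complex.intCast_re, Complex.intCast_im]
  field_simp
  ring

lemma vnormSq_leray_le {j : Fin 3 → ℤ} (hj : j ≠ 0) (x : Fin 3 → ℂ) :
    vnormSq (leray j x) ≤ vnormSq x := by
  rw [← vnormSq_leray_add hj x]
  exact le_add_of_nonneg_right (div_nonneg (sq_nonneg _) (znormSq_nonneg j))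

lemma vnormSq_nonneg (x : Fin 3 → ℂ) : 0 ≤ vnormSq x :=
  sum_nonneg fun _ _ => sq_nonneg _

lemma vnormSq_le_of_norm_le {x : Fin 3 → ℂ} {M : ℝ} (hx : ∀ k, ‖x k‖ ≤ M) :
    vnormSq x ≤ 3 * M ^ 2 := by
  calc vnormSq x ≤ ∑ _k : Fin 3, M ^ 2 :=
        sum_le_sum fun k _ => pow_le_pow_left₀ (norm_nonneg _) (hx k) 2
    _ = 3 * M ^ 2 := by simp

lemma vnormSq_real_smul (c : ℝ) (x : Fin 3 → ℂ) :
    vnormSq (fun i => (c : ℂ) * x i) = c ^ 2 * vnormSq x := by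
  simp [vnormSq, mul_sum, mul_pow]

lemma vnormSq_Wmap_le {θ : ℂ → ℂ} (hθ : ∀ ξ, ‖θ ξ‖ ≤ 2) (Cs : ℝ)
    (w : (Fin 3 → ℤ) → (Fin 3 → ℂ)) {j : Fin 3 → ℤ} (hj : j ≠ 0) :
    vnormSq (Wmap θ Cs w j) ≤ (Cs / znorm j ^ 3) ^ 2 * 12 := by
  unfold Wmap
  rw [vnormSq_real_smul]
  gcongr
  refine (vnormSq_leray_le hj _).trans ?_
  linarith [vnormSq_le_of_norm_le fun k => hθ ((znorm j ^ 3 / Cs : ℝ) * w j k)]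

lemma rpow_mul_vnormSq_Wmap_le {θ : ℂ → ℂ} (hθ : ∀ ξ, ‖θ ξ‖ ≤ 2) (Cs r : ℝ)
    (w : (Fin 3 → ℤ) → (Fin 3 → ℂ)) {j : Fin 3 → ℤ} (hj : j ≠ 0) :
    znorm j ^ r * vnormSq (Wmap θ Cs w j) ≤ 12 * Cs ^ 2 * znorm j ^ (r - 6) := by
  calc znorm j ^ r * vnormSq (Wmap θ Cs w j) ≤ znorm j ^ r * ((Cs / znorm j ^ 3) ^ 2 * 12) :=
        mul_le_mul_of_nonneg_left (vnormSq_Wmap_le hθ Cs w hj) (Real.rpow_nonneg (znorm_nonneg j) r)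
    _ = 12 * Cs ^ 2 * znorm j ^ (r - 6) := by
        rw [Real.rpow_sub (znorm_pos hj), show (6 : ℝ) = (6 : ℕ) by norm_num, Real.rpow_natCast]
        field_simp

/-- Global boundedness of the truncation map `W` from `H` into `H^{3/2−ε}`: if
`|θ(ξ)| ≤ 2` everywhere, then for every `ε > 0` there is a constant `C_ε > 0`, depending
only on `ε` and `C*`, such that `Σ_{j≠0} |j|^{3−2ε} |W(w)_j|² ≤ C_ε` for every family
`w`. -/
theorem Wmap_globally_bounded (Cs : ℝ) (hCs : 0 < Cs) (ε : ℝ) (hε : 0 < ε) :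
    ∃ Cε : ℝ, 0 < Cε ∧ ∀ θ : ℂ → ℂ, (∀ ξ : ℂ, ‖θ ξ‖ ≤ 2) →
      ∀ w : (Fin 3 → ℤ) → (Fin 3 → ℂ),
        Summable (fun j : {j : Fin 3 → ℤ // j ≠ 0} =>
          (znorm j.1) ^ (3 - 2 * ε) * vnormSq (Wmap θ Cs w j.1)) ∧
        (∑' j : {j : Fin 3 → ℤ // j ≠ 0},
          (znorm j.1) ^ (3 - 2 * ε) * vnormSq (Wmap θ Cs w j.1)) ≤ Cε := by
  set S := ∑' j : {j : Fin 3 → ℤ // j ≠ 0}, znorm j.1 ^ (-(3 + 2 * ε))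
  have hsum : Summable fun j : {j : Fin 3 → ℤ // j ≠ 0} => znorm j.1 ^ (-(3 + 2 * ε)) :=
    (summable_znorm_rpow_neg (by linarith)).subtype _
  have hone : (fun _ => 1 : Fin 3 → ℤ) ≠ 0 := fun h => one_ne_zero (congrFun h 0)
  have hS : 0 < S := hsum.tsum_pos (fun j => Real.rpow_nonneg (znorm_nonneg _) _)
    ⟨_, hone⟩ (Real.rpow_pos_of_pos (znorm_pos hone) _)
  refine ⟨12 * Cs ^ 2 * S, by positivity, fun θ hθ w => ?_⟩
  have hbound (j : {j : Fin 3 → ℤ // j ≠ 0}) :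
      znorm j.1 ^ (3 - 2 * ε) * vnormSq (Wmap θ Cs w j.1) ≤
        12 * Cs ^ 2 * znorm j.1 ^ (-(3 + 2 * ε)) :=
    (rpow_mul_vnormSq_Wmap_le hθ Cs _ w j.2).trans_eq (by ring_nf)
  have hmaj := hsum.mul_left (12 * Cs ^ 2)
  have hW : Summable fun j : {j : Fin 3 → ℤ // j ≠ 0} =>
      znorm j.1 ^ (3 - 2 * ε) * vnormSq (Wmap θ Cs w j.1) :=
    hmaj.of_nonneg_of_le
      (fun j => mul_nonneg (Real.rpow_nonneg (znorm_nonneg _) _) (vnormSq_nonneg _)) hbound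
  exact ⟨hW, (hW.tsum_le_tsum hbound hmaj).trans_eq tsum_mul_left⟩

end
end

section
/- Let k, ρ > 0 and N ∈ ℕ be such that for all l, m ∈ C_N^k, |l − m|² ≤ ρ implies l = m. Let a, b : ℤ³ → ℂ with a_l = 0 for every l ∉ C_N^k, with b_0 = 0, and with Σ_l |b_l| < ∞. Then for every j ∈ C_N^k one has Σ_{l∈ℤ³} a_l b_{j−l} = Σ_{l∈ℤ³, |j−l|²>ρ} a_l b_{j−l}; i.e., on the intermediate modes the convolution of a spectrally localized factor with b only involves the high-frequency part b_{>ρ} of b. -/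
noncomputable section

/-- Membership in the intermediate shell `C_N^k = {l ∈ ℤ³ : N − k ≤ |l|² ≤ N + k}`. -/
def inShell (N : ℕ) (k : ℝ) (l : Fin 3 → ℤ) : Prop :=
  (N : ℝ) - k ≤ znormSq l ∧ znormSq l ≤ (N : ℝ) + k

theorem mul_apply_sub_eq_zero_of_znormSq_le {R : Type*} [MulZeroClass R] {N : ℕ} {k ρ : ℝ}
    (hsep : ∀ l m : Fin 3 → ℤ, inShell N k l → inShell N k m →
      znormSq (l - m) ≤ ρ → l = m)
    {a b : (Fin 3 → ℤ) → R} (ha : ∀ l : Fin 3 → ℤ, ¬ inShell N k l → a l = 0)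
    (hb0 : b 0 = 0) {j l : Fin 3 → ℤ} (hj : inShell N k j) (hjl : znormSq (j - l) ≤ ρ) :
    a l * b (j - l) = 0 := by
  by_cases hl : inShell N k l
  · rw [hsep j l hj hl hjl, sub_self, hb0, mul_zero]
  · rw [ha l hl, zero_mul]

theorem convolution_high_frequency_only_general (k ρ : ℝ) (N : ℕ)
    (hsep : ∀ l m : Fin 3 → ℤ, inShell N k l → inShell N k m →
      znormSq (l - m) ≤ ρ → l = m)
    (a b : (Fin 3 → ℤ) → ℂ)
    (ha : ∀ l : Fin 3 → ℤ, ¬ inShell N k l → a l = 0)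
    (hb0 : b 0 = 0) :
    ∀ j : Fin 3 → ℤ, inShell N k j →
      (∑' l : Fin 3 → ℤ, a l * b (j - l)) =
        ∑' l : {l : Fin 3 → ℤ // ρ < znormSq (j - l)}, a l.1 * b (j - l.1) := by
  intro j hj
  refine (tsum_subtype_eq_of_support_subset fun l hl => ?_).symm
  by_contra hlow
  exact hl (mul_apply_sub_eq_zero_of_znormSq_le hsep ha hb0 hj (not_lt.1 hlow))

/-- If the difference set of `C_N^k` meets `B_ρ` only in zero, `a` is supported in
`C_N^k`, `b_0 = 0` and `b` is absolutely summable, then on intermediate modes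
`j ∈ C_N^k` the convolution `Σ_l a_l b_{j−l}` only involves the high-frequency part of
`b`: it equals `Σ_{|j−l|²>ρ} a_l b_{j−l}`. -/
theorem convolution_high_frequency_only (k ρ : ℝ) (hk : 0 < k) (hρ : 0 < ρ) (N : ℕ)
    (hsep : ∀ l m : Fin 3 → ℤ, inShell N k l → inShell N k m →
      znormSq (l - m) ≤ ρ → l = m)
    (a b : (Fin 3 → ℤ) → ℂ)
    (ha : ∀ l : Fin 3 → ℤ, ¬ inShell N k l → a l = 0)
    (hb0 : b 0 = 0)
    (hb : Summable (fun l : Fin 3 → ℤ => ‖b l‖)) :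
    ∀ j : Fin 3 → ℤ, inShell N k j →
      (∑' l : Fin 3 → ℤ, a l * b (j - l)) =
        ∑' l : {l : Fin 3 → ℤ // ρ < znormSq (j - l)}, a l.1 * b (j - l.1) :=
  convolution_high_frequency_only_general k ρ N hsep a b ha hb0

end
end
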